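/- Let 1 < p < ∞ with conjugate exponent q = p/(p-1), let w be a strictly positive density on U satisfying (★), and let f ∈ L^q(w). If ∫_U f(ξ)ψ̃(ξ)w(ξ)dξ = 0 for every ψ ∈ L^∞, where ψ̃(ξ) := ψ(ξ) − ∑_{i=1}^n (w_i^c(ξ_i^c)/w(ξ)) ∫ ψ(ξ)w(ξ)dξ_i^c + (n−1)∫_U ψ(η)w(η)dη, then f(ξ) = (1/n)∑_{i=1}^n Ψ_i(ξ_i) holds w-almost everywhere, where Ψ_i(ξ_i) := n ∫ f(ξ)w_i^c(ξ_i^c)dξ_i^c − (n−1)∫_U f(η)w(η)dη belongs to L^1(w) for each 1 ≤ i ≤ n. -/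

import Mathlib

open MeasureTheory

noncomputable section

/-- `I` is a closed interval of the form `(-∞,b]`, `[a,∞)`, or `[a,b]` with `a < b`. -/
def IsClosedIntervalType (I : Set ℝ) : Prop :=
  (∃ b : ℝ, I = Set.Iic b) ∨ (∃ a : ℝ, I = Set.Ici a) ∨ (∃ a b : ℝ, a < b ∧ I = Set.Icc a b)

/-- Integrate out all coordinates except the `i`-th one, at value `t` of the `i`-th
coordinate: `margC i F t = ∫ F dξᵢᶜ` evaluated at `ξᵢ = t`. -/
def margC {n : ℕ} (i : Fin n) (F : (Fin n → ℝ) → ℝ) (t : ℝ) : ℝ :=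
  ∫ y : {j : Fin n // j ≠ i} → ℝ, F (fun j => if h : j = i then t else y ⟨j, h⟩)

/-- Integrate out the `i`-th coordinate: `margO i F ξ = ∫ F dξᵢ`, a function of `ξ`
depending only on `ξᵢᶜ`. -/
def margO {n : ℕ} (i : Fin n) (F : (Fin n → ℝ) → ℝ) (ξ : Fin n → ℝ) : ℝ :=
  ∫ t : ℝ, F (Function.update ξ i t)

/-- The weighted measure `w(ξ)dξ`; `L^p(w)` is `ℒ^p` of this measure. -/
def wMeasure {n : ℕ} (w : (Fin n → ℝ) → ℝ) : Measure (Fin n → ℝ) :=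
  volume.withDensity (fun ξ => ENNReal.ofReal (w ξ))

/-- `w` is a strictly positive density on `U` (extended by zero off `U`). -/
structure IsDensityOn {n : ℕ} (w : (Fin n → ℝ) → ℝ) (U : Set (Fin n → ℝ)) : Prop where
  measurable : Measurable w
  pos : ∀ ξ ∈ U, 0 < w ξ
  zero : ∀ ξ ∉ U, w ξ = 0
  integral_one : (∫ ξ, w ξ) = 1

/-- Condition (★): `wᵢ·wᵢᶜ/w ∈ L^p(w)` for all `1 ≤ i ≤ n`. -/
def StarCondition {n : ℕ} (w : (Fin n → ℝ) → ℝ) (p : ℝ) : Prop :=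
  ∀ i : Fin n,
    MemLp (fun ξ => margC i w (ξ i) * margO i w ξ / w ξ) (ENNReal.ofReal p) (wMeasure w)

/-- The Smirnov property for exponent `q`. -/
def SmirnovProperty {n : ℕ} (w : (Fin n → ℝ) → ℝ) (q : ℝ) : Prop :=
  ∀ Ψ : Fin n → ℝ → ℝ,
    (∀ i, MemLp (fun ξ => Ψ i (ξ i)) 1 (wMeasure w)) →
    MemLp (fun ξ => (1 / (n : ℝ)) * ∑ i, Ψ i (ξ i)) (ENNReal.ofReal q) (wMeasure w) →
    ∀ i, MemLp (fun ξ => Ψ i (ξ i)) (ENNReal.ofReal q) (wMeasure w)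

/-- Membership in `N = {φ ∈ L^p(w) : ∫ φ w dξᵢᶜ = 0 a.e., ∀ i}`. -/
def MemN {n : ℕ} (w : (Fin n → ℝ) → ℝ) (p : ℝ) (φ : (Fin n → ℝ) → ℝ) : Prop :=
  MemLp φ (ENNReal.ofReal p) (wMeasure w) ∧
  ∀ i : Fin n, ∀ᵐ t : ℝ, margC i (fun ξ => φ ξ * w ξ) t = 0

/-!
Fubini in the `i`-th coordinate gives `∫ A · (∫ B dξᵢᶜ)(ξᵢ) = ∫ B · (∫ A dξᵢᶜ)(ξᵢ)`. With
`A = f wᵢᶜ` and `B = ψ w` this moves the marginal operators of `ψ̃` onto `f`: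
`∫ f ψ̃ w = ∫ ψ g w` for `g = f - ∑ᵢ Fᵢ(ξᵢ) + (n-1) ∫ f w`, `Fᵢ = ∫ f wᵢᶜ dξᵢᶜ`.
Testing against indicators then gives `g = 0` `w`-a.e. All the integrability this needs comes
from `f wᵢ wᵢᶜ ∈ L¹`, which is Hölder's inequality for `f ∈ L^q(w)` and `wᵢ wᵢᶜ / w ∈ L^p(w)`.
As `f` is only defined `w`-a.e., it is first replaced by a measurable version vanishing where
`w = 0`; because `U` is a box, `wᵢᶜ(ξᵢᶜ) ≠ 0` and `ξᵢ ∈ Iᵢ` force `w(ξ) > 0`, so `Fᵢ(ξᵢ)` is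
unchanged for `ξᵢ ∈ Iᵢ`.
-/

section SplitCoord

variable {n : ℕ} (i : Fin n)

def insertCoord (t : ℝ) (y : {j : Fin n // j ≠ i} → ℝ) : Fin n → ℝ :=
  fun j => if h : j = i then t else y ⟨j, h⟩

@[simp] lemma insertCoord_self (t : ℝ) (y : {j : Fin n // j ≠ i} → ℝ) :
    insertCoord i t y i = t :=
  dif_pos rfl

lemma margC_eq_integral_insertCoord (F : (Fin n → ℝ) → ℝ) (t : ℝ) :
    margC i F t = ∫ y, F (insertCoord i t y) :=
  rfl

lemma update_eq_insertCoord (ξ : Fin n → ℝ) (s : ℝ) :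
    Function.update ξ i s = insertCoord i s (fun j => ξ j) := by
  funext j
  by_cases h : j = i
  · subst h; simp
  · simp [insertCoord, h]

def splitCoord : (Fin n → ℝ) ≃ᵐ ℝ × ({j : Fin n // j ≠ i} → ℝ) :=
  (MeasurableEquiv.piEquivPiSubtypeProd (fun _ => ℝ) (· = i)).trans
    ((MeasurableEquiv.piUnique fun _ : {j : Fin n // j = i} => ℝ).prodCongr
      (MeasurableEquiv.refl _))

lemma coe_splitCoord_symm :
    ⇑(splitCoord i).symm = fun z : ℝ × ({j : Fin n // j ≠ i} → ℝ) => insertCoord i z.1 z.2 := by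
  funext z j
  by_cases h : j = i
  · subst h; rfl
  · simp [splitCoord, insertCoord, h]; rfl

lemma measurePreserving_splitCoord :
    MeasurePreserving (splitCoord i) volume (volume.prod volume) :=
  ((volume_preserving_piUnique _).prod (MeasurePreserving.id volume)).comp <| by
    -- the library lemma carries a different `Fintype {j // j = i}` instance
    convert measurePreserving_piEquivPiSubtypeProd (fun _ : Fin n => (volume : Measure ℝ)) (· = i)
      using 3
    all_goals try rfl
    exact congr(@Measure.pi _ _ $(Subsingleton.elim _ _) _ _)

lemma integrable_comp_insertCoord {F : (Fin n → ℝ) → ℝ} (hF : Integrable F) :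
    Integrable (fun z : ℝ × ({j : Fin n // j ≠ i} → ℝ) => F (insertCoord i z.1 z.2))
      (volume.prod volume) := by
  have := (measurePreserving_splitCoord i).symm.integrable_comp_emb
    (splitCoord i).symm.measurableEmbedding |>.mpr hF
  rwa [coe_splitCoord_symm] at this

lemma integral_margC {F : (Fin n → ℝ) → ℝ} (hF : Integrable F) :
    ∫ t, margC i F t = ∫ ξ, F ξ := by
  rw [← (measurePreserving_splitCoord i).symm.integral_comp' F, coe_splitCoord_symm,
    integral_prod _ (integrable_comp_insertCoord i hF)]
  rfl

lemma integrable_margC {F : (Fin n → ℝ) → ℝ} (hF : Integrable F) :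
    Integrable (margC i F) :=
  (integrable_comp_insertCoord i hF).integral_prod_left

lemma ae_ae_insertCoord {P : (Fin n → ℝ) → Prop} (h : ∀ᵐ ξ, P ξ) :
    ∀ᵐ t, ∀ᵐ y, P (insertCoord i t y) := by
  have := (measurePreserving_splitCoord i).symm.quasiMeasurePreserving.ae h
  rw [coe_splitCoord_symm] at this
  exact Measure.ae_ae_of_ae_prod (p := fun z => P (insertCoord i z.1 z.2)) this

lemma ae_comp_eval {P : ℝ → Prop} (h : ∀ᵐ t, P t) : ∀ᵐ ξ : Fin n → ℝ, P (ξ i) :=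
  (Measure.quasiMeasurePreserving_eval _ i).ae h

lemma measurable_margC {F : (Fin n → ℝ) → ℝ} (hF : Measurable F) : Measurable (margC i F) := by
  have := (hF.comp (splitCoord i).symm.measurable).stronglyMeasurable.integral_prod_right'
    (ν := volume)
  rw [coe_splitCoord_symm] at this
  exact this.measurable

lemma measurable_margO {F : (Fin n → ℝ) → ℝ} (hF : Measurable F) : Measurable (margO i F) := by
  have := (hF.comp (splitCoord i).symm.measurable).stronglyMeasurable.integral_prod_left'
    (μ := volume)
  rw [coe_splitCoord_symm] at this
  have hrestrict : Measurable fun ξ : Fin n → ℝ => fun j : {j // j ≠ i} => ξ j :=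
    measurable_pi_lambda _ fun j => measurable_pi_apply j.1
  have hmargO : margO i F = fun ξ => ∫ s, F (insertCoord i s fun j => ξ j) := by
    funext ξ; simp only [margO, update_eq_insertCoord]
  rw [hmargO]
  exact this.measurable.comp hrestrict

lemma margC_mul_comp_eval (F : (Fin n → ℝ) → ℝ) (g : ℝ → ℝ) (t : ℝ) :
    margC i (fun ξ => F ξ * g (ξ i)) t = margC i F t * g t := by
  simp only [margC_eq_integral_insertCoord, insertCoord_self, integral_mul_const]

lemma integral_mul_margC_comm {i : Fin n} {A B : (Fin n → ℝ) → ℝ}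
    (hA : Integrable fun ξ => A ξ * margC i B (ξ i))
    (hB : Integrable fun ξ => B ξ * margC i A (ξ i)) :
    ∫ ξ, A ξ * margC i B (ξ i) = ∫ ξ, B ξ * margC i A (ξ i) := by
  rw [← integral_margC i hA, ← integral_margC i hB]
  simp only [margC_mul_comp_eval, mul_comm]

lemma integrable_comp_eval_mul {w : (Fin n → ℝ) → ℝ} {g : ℝ → ℝ} (hwm : Measurable w)
    (hw0 : ∀ ξ, 0 ≤ w ξ) (hwi : Integrable w) (hg : Measurable g)
    (h : Integrable fun t => g t * margC i w t) :
    Integrable fun ξ => g (ξ i) * w ξ := by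
  have hins : Measurable fun z : ℝ × ({j : Fin n // j ≠ i} → ℝ) => insertCoord i z.1 z.2 := by
    rw [← coe_splitCoord_symm]; exact (splitCoord i).symm.measurable
  rw [← (measurePreserving_splitCoord i).symm.integrable_comp_emb
    (splitCoord i).symm.measurableEmbedding, coe_splitCoord_symm]
  refine (integrable_prod_iff ?_).2 ⟨?_, ?_⟩
  · exact (((hg.comp (measurable_pi_apply i)).mul hwm).comp hins).aestronglyMeasurable
  · filter_upwards [(integrable_comp_insertCoord i hwi).prod_right_ae] with t ht
    simpa only [Function.comp_apply, insertCoord_self] using ht.const_mul (g t)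
  · refine h.norm.congr (ae_of_all _ fun t => ?_)
    simp only [Function.comp_apply, insertCoord_self, norm_mul, Real.norm_of_nonneg (hw0 _),
      integral_const_mul, margC_eq_integral_insertCoord,
      Real.norm_of_nonneg (integral_nonneg fun y => hw0 _)]

end SplitCoord

section WeightedMeasure

variable {n : ℕ} {w : (Fin n → ℝ) → ℝ}

lemma ae_wMeasure_iff (hwm : Measurable w) {P : (Fin n → ℝ) → Prop} :
    (∀ᵐ ξ ∂wMeasure w, P ξ) ↔ ∀ᵐ ξ, 0 < w ξ → P ξ := by
  simp only [wMeasure, ae_withDensity_iff hwm.ennreal_ofReal, ne_eq, ENNReal.ofReal_eq_zero,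
    not_le]

lemma integrable_wMeasure_iff (hwm : Measurable w) (hw0 : ∀ ξ, 0 ≤ w ξ)
    {g : (Fin n → ℝ) → ℝ} :
    Integrable g (wMeasure w) ↔ Integrable fun ξ => g ξ * w ξ := by
  simp only [wMeasure, integrable_withDensity_iff hwm.ennreal_ofReal
    (ae_of_all _ fun _ => ENNReal.ofReal_lt_top), ENNReal.toReal_ofReal (hw0 _)]

lemma exists_measurable_ae_eq_of_pos (hwm : Measurable w) {f : (Fin n → ℝ) → ℝ}
    (hf : AEStronglyMeasurable f (wMeasure w)) :
    ∃ f' : (Fin n → ℝ) → ℝ, Measurable f' ∧ (∀ ξ, w ξ = 0 → f' ξ = 0) ∧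
      ∀ᵐ ξ, 0 < w ξ → f ξ = f' ξ := by
  refine ⟨fun ξ => if w ξ = 0 then 0 else hf.mk f ξ,
    Measurable.ite (hwm (measurableSet_singleton 0)) measurable_const
      hf.stronglyMeasurable_mk.measurable,
    fun ξ h => if_pos h, ?_⟩
  filter_upwards [(ae_wMeasure_iff hwm).1 hf.ae_eq_mk] with ξ hξ hpos
  rw [if_neg hpos.ne', hξ hpos]

lemma mul_ae_eq_mul_of_pos (hw0 : ∀ ξ, 0 ≤ w ξ) {f f' : (Fin n → ℝ) → ℝ}
    (hff' : ∀ᵐ ξ, 0 < w ξ → f ξ = f' ξ) :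
    (fun ξ => f ξ * w ξ) =ᵐ[volume] fun ξ => f' ξ * w ξ := by
  filter_upwards [hff'] with ξ hξ
  rcases (hw0 ξ).eq_or_lt with h | h
  · simp [← h]
  · rw [hξ h]

end WeightedMeasure

section Box

variable {n : ℕ} {I : Fin n → Set ℝ} {U : Set (Fin n → ℝ)} {w : (Fin n → ℝ) → ℝ}

lemma IsDensityOn.nonneg (hw : IsDensityOn w U) (ξ : Fin n → ℝ) : 0 ≤ w ξ := by
  by_cases h : ξ ∈ U
  · exact (hw.pos ξ h).le
  · exact (hw.zero ξ h).ge

lemma IsDensityOn.integrable (hw : IsDensityOn w U) : Integrable w :=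
  Integrable.of_integral_ne_zero (by simp [hw.integral_one])

lemma IsDensityOn.mem_of_pos (hw : IsDensityOn w U) (hU : U = Set.univ.pi I)
    {ξ : Fin n → ℝ} (h : 0 < w ξ) (j : Fin n) : ξ j ∈ I j := by
  by_contra hj
  exact h.ne' (hw.zero ξ fun hξ => hj ((hU ▸ hξ) j (Set.mem_univ j)))

lemma IsDensityOn.pos_of_margO_ne_zero (hw : IsDensityOn w U) (hU : U = Set.univ.pi I)
    {i : Fin n} {ξ : Fin n → ℝ} (hξi : ξ i ∈ I i) (h : margO i w ξ ≠ 0) : 0 < w ξ := by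
  obtain ⟨s, hs⟩ : ∃ s, w (Function.update ξ i s) ≠ 0 := by
    by_contra! hcon
    exact h (by simp [margO, hcon])
  refine hw.pos ξ (hU ▸ fun j _ => ?_)
  by_cases hj : j = i
  · exact hj ▸ hξi
  · simpa [Function.update_of_ne hj] using
      hw.mem_of_pos hU (lt_of_le_of_ne (hw.nonneg _) (Ne.symm hs)) j

lemma IsDensityOn.margC_mul_margO_ae_congr (hw : IsDensityOn w U) (hU : U = Set.univ.pi I)
    (i : Fin n) {f f' : (Fin n → ℝ) → ℝ} (hff' : ∀ᵐ ξ, 0 < w ξ → f ξ = f' ξ) :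
    (fun ξ => margC i (fun η => f η * margO i w η) (ξ i)) =ᵐ[wMeasure w]
      fun ξ => margC i (fun η => f' η * margO i w η) (ξ i) := by
  have hslice : ∀ᵐ t, t ∈ I i → margC i (fun η => f η * margO i w η) t =
      margC i (fun η => f' η * margO i w η) t := by
    filter_upwards [ae_ae_insertCoord i hff'] with t ht htI
    simp only [margC_eq_integral_insertCoord]
    refine integral_congr_ae ?_
    filter_upwards [ht] with y hy
    by_cases h0 : margO i w (insertCoord i t y) = 0
    · simp only [h0, mul_zero]
    · rw [hy (hw.pos_of_margO_ne_zero hU (by rwa [insertCoord_self]) h0)]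
  refine (ae_wMeasure_iff hw.measurable).2 ?_
  filter_upwards [ae_comp_eval i hslice] with ξ hξ hpos
  exact hξ (hw.mem_of_pos hU hpos i)

end Box

lemma sum_sub_eq_one_div_mul_sum {n : ℕ} (hn : n ≠ 0) (a : Fin n → ℝ) (c : ℝ) :
    ∑ i, a i - ((n : ℝ) - 1) * c = 1 / (n : ℝ) * ∑ i, ((n : ℝ) * a i - ((n : ℝ) - 1) * c) := by
  rw [Finset.sum_sub_distrib, ← Finset.mul_sum, Finset.sum_const, Finset.card_univ,
    Fintype.card_fin, nsmul_eq_mul]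
  field_simp

lemma integral_sub_finsetSum_add {α ι : Type*} [MeasurableSpace α] {μ : Measure α}
    (s : Finset ι) {X Z : α → ℝ} {Y : ι → α → ℝ} (hX : Integrable X μ)
    (hY : ∀ i ∈ s, Integrable (Y i) μ) (hZ : Integrable Z μ) :
    ∫ a, (X a - ∑ i ∈ s, Y i a + Z a) ∂μ = ∫ a, X a ∂μ - ∑ i ∈ s, ∫ a, Y i a ∂μ + ∫ a, Z a ∂μ := by
  rw [integral_add (f := fun a => X a - ∑ i ∈ s, Y i a) (hX.sub (integrable_finsetSum s hY)) hZ,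
    integral_sub hX (integrable_finsetSum s hY), integral_finsetSum s hY]

section Core

variable {n : ℕ} {w f : (Fin n → ℝ) → ℝ}

lemma integrable_mul_margO_mul_margC_of_memLp {p q : ℝ} (hpq : p.HolderConjugate q)
    (hwm : Measurable w) (hw0 : ∀ ξ, 0 ≤ w ξ) (hstar : StarCondition w p)
    (hf : MemLp f (ENNReal.ofReal q) (wMeasure w)) (hf0 : ∀ ξ, w ξ = 0 → f ξ = 0) (i : Fin n) :
    Integrable fun ξ => f ξ * margO i w ξ * margC i w (ξ i) := by
  have := hpq.ennrealOfReal
  have h := (hstar i).integrable_mul hf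
  rw [integrable_wMeasure_iff hwm hw0] at h
  refine h.congr (ae_of_all _ fun ξ => ?_)
  by_cases h0 : w ξ = 0
  · simp [hf0 ξ h0]
  · simp only [Pi.mul_apply]
    field_simp

lemma abs_margC_mul_le (hw0 : ∀ ξ, 0 ≤ w ξ) (hwi : Integrable w) (i : Fin n)
    {ψ : (Fin n → ℝ) → ℝ} {C : ℝ} (hψ : ∀ ξ, |ψ ξ| ≤ C) :
    ∀ᵐ t, |margC i (fun η => ψ η * w η) t| ≤ C * margC i w t := by
  filter_upwards [(integrable_comp_insertCoord i hwi).prod_right_ae] with t ht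
  rw [margC_eq_integral_insertCoord, margC_eq_integral_insertCoord, ← integral_const_mul C,
    ← Real.norm_eq_abs]
  refine norm_integral_le_of_norm_le (ht.const_mul C) (ae_of_all _ fun y => ?_)
  rw [Real.norm_eq_abs, abs_mul, abs_of_nonneg (hw0 _)]
  exact mul_le_mul_of_nonneg_right (hψ _) (hw0 _)

lemma integrable_margC_comp_eval_mul (hwm : Measurable w) (hw0 : ∀ ξ, 0 ≤ w ξ)
    (hwi : Integrable w) (hfm : Measurable f) {i : Fin n}
    (hH : Integrable fun ξ => f ξ * margO i w ξ * margC i w (ξ i)) :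
    Integrable fun ξ => margC i (fun η => f η * margO i w η) (ξ i) * w ξ := by
  refine integrable_comp_eval_mul i hwm hw0 hwi
    (measurable_margC i (hfm.mul (measurable_margO i hwm))) ?_
  exact (integrable_margC i hH).congr (ae_of_all _ (margC_mul_comp_eval i _ _))

lemma integrable_mul_margO_mul_margC (hwm : Measurable w) (hw0 : ∀ ξ, 0 ≤ w ξ)
    (hwi : Integrable w) (hfm : Measurable f) {i : Fin n}
    (hH : Integrable fun ξ => f ξ * margO i w ξ * margC i w (ξ i))
    {ψ : (Fin n → ℝ) → ℝ} (hψm : Measurable ψ) {C : ℝ} (hψ : ∀ ξ, |ψ ξ| ≤ C) :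
    Integrable fun ξ => f ξ * margO i w ξ * margC i (fun η => ψ η * w η) (ξ i) := by
  refine (hH.norm.const_mul C).mono' ?_ ?_
  · exact ((hfm.mul (measurable_margO i hwm)).mul
      ((measurable_margC i (hψm.mul hwm)).comp (measurable_pi_apply i))).aestronglyMeasurable
  · filter_upwards [ae_comp_eval i (abs_margC_mul_le hw0 hwi i hψ)] with ξ hξ
    have hmargO : 0 ≤ margO i w ξ := integral_nonneg fun _ => hw0 _
    have hmargC : 0 ≤ margC i w (ξ i) := integral_nonneg fun _ => hw0 _
    simp only [Real.norm_eq_abs, abs_mul, abs_of_nonneg hmargO, abs_of_nonneg hmargC]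
    calc |f ξ| * margO i w ξ * |margC i (fun η => ψ η * w η) (ξ i)|
        ≤ |f ξ| * margO i w ξ * (C * margC i w (ξ i)) := by gcongr
      _ = C * (|f ξ| * margO i w ξ * margC i w (ξ i)) := by ring

lemma integral_mul_tilde_eq (hwm : Measurable w) (hw0 : ∀ ξ, 0 ≤ w ξ) (hwi : Integrable w)
    (hfm : Measurable f) (hf0 : ∀ ξ, w ξ = 0 → f ξ = 0) (hfw : Integrable fun ξ => f ξ * w ξ)
    (hH : ∀ i, Integrable fun ξ => f ξ * margO i w ξ * margC i w (ξ i))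
    {ψ : (Fin n → ℝ) → ℝ} (hψm : Measurable ψ) {C : ℝ} (hψ : ∀ ξ, |ψ ξ| ≤ C) :
    ∫ ξ, f ξ * (ψ ξ - (∑ i : Fin n, margO i w ξ / w ξ * margC i (fun η => ψ η * w η) (ξ i)) +
        ((n : ℝ) - 1) * ∫ η, ψ η * w η) * w ξ =
      ∫ ξ, ψ ξ * (f ξ - ∑ i : Fin n, margC i (fun η => f η * margO i w η) (ξ i) +
        ((n : ℝ) - 1) * ∫ η, f η * w η) * w ξ := by
  have hψC : ∀ᵐ ξ, ‖ψ ξ‖ ≤ C := ae_of_all _ hψ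
  have hψw : Integrable fun ξ => ψ ξ * w ξ := hwi.bdd_mul hψm.aestronglyMeasurable hψC
  have hX : Integrable fun ξ => f ξ * ψ ξ * w ξ :=
    (hfw.bdd_mul hψm.aestronglyMeasurable hψC).congr (ae_of_all _ fun ξ => by ring)
  have hA (i : Fin n) := integrable_mul_margO_mul_margC hwm hw0 hwi hfm (hH i) hψm hψ
  have hB (i : Fin n) : Integrable fun ξ =>
      ψ ξ * w ξ * margC i (fun η => f η * margO i w η) (ξ i) :=
    ((integrable_margC_comp_eval_mul hwm hw0 hwi hfm (hH i)).bdd_mul hψm.aestronglyMeasurable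
      hψC).congr (ae_of_all _ fun ξ => by ring)
  calc _ = ∫ ξ, (f ξ * ψ ξ * w ξ -
          ∑ i, f ξ * margO i w ξ * margC i (fun η => ψ η * w η) (ξ i) +
          ((n : ℝ) - 1) * (∫ η, ψ η * w η) * (f ξ * w ξ)) := by
        refine integral_congr_ae (ae_of_all _ fun ξ => ?_)
        by_cases h0 : w ξ = 0
        · simp [hf0 ξ h0]
        have hterm (i : Fin n) : f ξ * margO i w ξ * margC i (fun η => ψ η * w η) (ξ i) =
            f ξ * (margO i w ξ / w ξ * margC i (fun η => ψ η * w η) (ξ i)) * w ξ := by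
          field_simp
        simp only [hterm, ← Finset.sum_mul, ← Finset.mul_sum]
        ring
    _ = (∫ ξ, f ξ * ψ ξ * w ξ) -
          ∑ i, (∫ ξ, ψ ξ * w ξ * margC i (fun η => f η * margO i w η) (ξ i)) +
          ∫ ξ, ((n : ℝ) - 1) * (∫ η, f η * w η) * (ψ ξ * w ξ) := by
        rw [integral_sub_finsetSum_add _ hX (fun i _ => hA i) (hfw.const_mul _),
          integral_const_mul, integral_const_mul]
        congr 1
        · exact congrArg _ (Finset.sum_congr rfl fun i _ => integral_mul_margC_comm (hA i) (hB i))
        · ring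
    _ = _ := by
        rw [← integral_sub_finsetSum_add _ hX (fun i _ => hB i) (hψw.const_mul _)]
        refine integral_congr_ae (ae_of_all _ fun ξ => ?_)
        simp only [← Finset.mul_sum]
        ring

lemma ae_eq_sum_margC_of_orthogonal (hwm : Measurable w) (hw0 : ∀ ξ, 0 ≤ w ξ)
    (hwi : Integrable w) (hfm : Measurable f) (hf0 : ∀ ξ, w ξ = 0 → f ξ = 0)
    (hfw : Integrable fun ξ => f ξ * w ξ)
    (hH : ∀ i, Integrable fun ξ => f ξ * margO i w ξ * margC i w (ξ i))
    (horth : ∀ ψ : (Fin n → ℝ) → ℝ, MemLp ψ ⊤ (wMeasure w) →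
      (∫ ξ, f ξ * (ψ ξ -
        (∑ i : Fin n, margO i w ξ / w ξ * margC i (fun η => ψ η * w η) (ξ i)) +
        ((n : ℝ) - 1) * ∫ η, ψ η * w η) * w ξ) = 0) :
    ∀ᵐ ξ ∂wMeasure w, f ξ = ∑ i : Fin n, margC i (fun η => f η * margO i w η) (ξ i) -
      ((n : ℝ) - 1) * ∫ η, f η * w η := by
  set g : (Fin n → ℝ) → ℝ := fun ξ => f ξ -
    ∑ i : Fin n, margC i (fun η => f η * margO i w η) (ξ i) + ((n : ℝ) - 1) * ∫ η, f η * w η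
  have hgw : Integrable fun ξ => g ξ * w ξ := by
    have hF := integrable_finsetSum Finset.univ fun i _ =>
      integrable_margC_comp_eval_mul hwm hw0 hwi hfm (hH i)
    refine ((hfw.sub hF).add (hwi.const_mul (((n : ℝ) - 1) * ∫ η, f η * w η))).congr
      (ae_of_all _ fun ξ => ?_)
    simp only [Pi.add_apply, Pi.sub_apply, g]
    rw [← Finset.sum_mul]
    ring
  have hgw0 : (fun ξ => g ξ * w ξ) =ᵐ[volume] 0 := by
    refine ae_eq_zero_of_forall_setIntegral_eq_of_sigmaFinite (fun s _ _ => hgw.integrableOn)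
      fun s hs _ => ?_
    have hψm : Measurable (s.indicator fun _ => (1 : ℝ)) := measurable_const.indicator hs
    have hψ (ξ : Fin n → ℝ) : |s.indicator (fun _ => (1 : ℝ)) ξ| ≤ 1 := by
      by_cases h : ξ ∈ s <;> simp [h]
    rw [← integral_indicator hs, ← horth _ (memLp_top_of_bound hψm.aestronglyMeasurable 1
      (ae_of_all _ hψ)), integral_mul_tilde_eq hwm hw0 hwi hfm hf0 hfw hH hψm hψ]
    refine integral_congr_ae (ae_of_all _ fun ξ => ?_)
    by_cases h : ξ ∈ s <;> simp [h, g]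
  rw [ae_wMeasure_iff hwm]
  filter_upwards [hgw0] with ξ hξ hpos
  have hg : g ξ = 0 := (mul_eq_zero.1 hξ).resolve_right hpos.ne'
  simp only [g] at hg
  linarith

end Core

theorem orthogonal_implies_sum_of_marginals_general
    {n : ℕ} (hn : 1 ≤ n) (I : Fin n → Set ℝ)
    (U : Set (Fin n → ℝ)) (hU : U = Set.univ.pi I)
    (w : (Fin n → ℝ) → ℝ) (hw : IsDensityOn w U)
    (p q : ℝ) (hp : 1 < p) (hq : q = p / (p - 1))
    (hstar : StarCondition w p)
    (f : (Fin n → ℝ) → ℝ) (hf : MemLp f (ENNReal.ofReal q) (wMeasure w))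
    (horth : ∀ ψ : (Fin n → ℝ) → ℝ, MemLp ψ ⊤ (wMeasure w) →
      (∫ ξ, f ξ * (ψ ξ -
        (∑ i : Fin n, margO i w ξ / w ξ * margC i (fun η => ψ η * w η) (ξ i)) +
        ((n : ℝ) - 1) * ∫ η, ψ η * w η) * w ξ) = 0) :
    (∀ i : Fin n, MemLp (fun ξ =>
        (n : ℝ) * margC i (fun η => f η * margO i w η) (ξ i) -
        ((n : ℝ) - 1) * ∫ η, f η * w η) 1 (wMeasure w)) ∧
    (∀ᵐ ξ ∂(wMeasure w), f ξ = (1 / (n : ℝ)) * ∑ i : Fin n,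
        ((n : ℝ) * margC i (fun η => f η * margO i w η) (ξ i) -
        ((n : ℝ) - 1) * ∫ η, f η * w η)) := by
  have hpq : p.HolderConjugate q := (Real.holderConjugate_iff_eq_conjExponent hp).2 hq
  have hwm := hw.measurable
  have : IsFiniteMeasure (wMeasure w) := isFiniteMeasure_withDensity_ofReal hw.integrable.2
  obtain ⟨f', hf'm, hf'0, hff'⟩ := exists_measurable_ae_eq_of_pos hwm hf.1
  have hfw := mul_ae_eq_mul_of_pos hw.nonneg hff'
  have hf'q : MemLp f' (ENNReal.ofReal q) (wMeasure w) := hf.ae_eq ((ae_wMeasure_iff hwm).2 hff')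
  have hf'w : Integrable fun ξ => f' ξ * w ξ := (integrable_wMeasure_iff hwm hw.nonneg).1 <|
    memLp_one_iff_integrable.1 (hf'q.mono_exponent (ENNReal.one_le_ofReal.2 hpq.symm.lt.le))
  have hH := integrable_mul_margO_mul_margC_of_memLp hpq hwm hw.nonneg hstar hf'q hf'0
  have hsum := ae_eq_sum_margC_of_orthogonal hwm hw.nonneg hw.integrable hf'm hf'0 hf'w hH
    fun ψ hψ => horth ψ hψ ▸ (integral_congr_ae (by
      filter_upwards [hfw] with ξ hξ
      simp only [mul_right_comm _ _ (w ξ), hξ])).symm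
  have hF (i : Fin n) := hw.margC_mul_margO_ae_congr hU i hff'
  rw [integral_congr_ae hfw]
  refine ⟨fun i => ?_, ?_⟩
  · refine ((memLp_one_iff_integrable.2 ?_).ae_eq (hF i).symm |>.const_mul _).sub (memLp_const _)
    exact (integrable_wMeasure_iff hwm hw.nonneg).2
      (integrable_margC_comp_eval_mul hwm hw.nonneg hw.integrable hf'm (hH i))
  · filter_upwards [(ae_wMeasure_iff hwm).2 hff', hsum, ae_all_iff.2 hF] with ξ hfξ hsumξ hFξ
    rw [hfξ, hsumξ, sum_sub_eq_one_div_mul_sum (by omega)]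
    simp only [hFξ]

/-- Lemma `lem: lem2` (4): under condition (★), if `f ∈ L^q(w)` satisfies
`∫ f ψ̃ w = 0` for all `ψ ∈ L^∞`, then `f = (1/n)∑ᵢ Ψᵢ(ξᵢ)` a.e., with
`Ψᵢ(ξᵢ) = n∫ f wᵢᶜ dξᵢᶜ - (n-1)∫ f w ∈ L^1(w)`. -/
theorem orthogonal_implies_sum_of_marginals
    {n : ℕ} (hn : 1 ≤ n) (I : Fin n → Set ℝ) (hI : ∀ i, IsClosedIntervalType (I i))
    (U : Set (Fin n → ℝ)) (hU : U = Set.univ.pi I)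
    (w : (Fin n → ℝ) → ℝ) (hw : IsDensityOn w U)
    (p q : ℝ) (hp : 1 < p) (hq : q = p / (p - 1))
    (hstar : StarCondition w p)
    (f : (Fin n → ℝ) → ℝ) (hf : MemLp f (ENNReal.ofReal q) (wMeasure w))
    (horth : ∀ ψ : (Fin n → ℝ) → ℝ, MemLp ψ ⊤ (wMeasure w) →
      (∫ ξ, f ξ * (ψ ξ -
        (∑ i : Fin n, margO i w ξ / w ξ * margC i (fun η => ψ η * w η) (ξ i)) +
        ((n : ℝ) - 1) * ∫ η, ψ η * w η) * w ξ) = 0) :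
    (∀ i : Fin n, MemLp (fun ξ =>
        (n : ℝ) * margC i (fun η => f η * margO i w η) (ξ i) -
        ((n : ℝ) - 1) * ∫ η, f η * w η) 1 (wMeasure w)) ∧
    (∀ᵐ ξ ∂(wMeasure w), f ξ = (1 / (n : ℝ)) * ∑ i : Fin n,
        ((n : ℝ) * margC i (fun η => f η * margO i w η) (ξ i) -
        ((n : ℝ) - 1) * ∫ η, f η * w η)) :=
  orthogonal_implies_sum_of_marginals_general hn I U hU w hw p q hp hq hstar f hf horth
end
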